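/- arXiv:1810.06697 — 2 statements merged into one kernel-verified Lean document; each statement's English description precedes it below -/
import Mathlib

section
/- Let D be an n×n real symmetric positive definite matrix and J a k×n real matrix of full row rank k. Define proj := I − Jᵀ (J D⁻¹ Jᵀ)⁻¹ J D⁻¹, and for F ∈ ℝⁿ, c ∈ ℝᵏ set F_v := proj·F + Jᵀ (J D⁻¹ Jᵀ)⁻¹ c. Then for every τ ∈ ℝⁿ, the acceleration a := D⁻¹ (proj·τ − F_v) satisfies J a + c = 0. In other words, the constrained dynamics automatically satisfies the acceleration-level constraint for every choice of input. -/
/-!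
Full row rank of `J` makes `S = J D⁻¹ Jᵀ` positive definite, hence invertible. Then `J D⁻¹`
has right inverse `Jᵀ S⁻¹` and annihilates `proj = 1 - Jᵀ S⁻¹ (J D⁻¹)`, so
`J a = J D⁻¹ proj (τ - F) - c = -c`.
-/

open Matrix

namespace Matrix

variable {m n R : Type*} [Fintype m] [Fintype n]

theorem linearIndependent_row_of_rank_eq_card [Field R] {A : Matrix m n R}
    (hA : A.rank = Fintype.card m) : LinearIndependent R A.row :=
  linearIndependent_iff_card_eq_finrank_span.mpr <| by
    rw [← hA, rank_eq_finrank_span_row, Set.finrank]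

theorem PosDef.mul_mul_conjTranspose_of_rank_eq_card [Field R] [PartialOrder R] [StarRing R]
    {A : Matrix n n R} (hA : A.PosDef) {B : Matrix m n R} (hB : B.rank = Fintype.card m) :
    (B * A * Bᴴ).PosDef :=
  hA.mul_mul_conjTranspose_same <| vecMul_injective_iff.mpr <|
    linearIndependent_row_of_rank_eq_card hB

section ObliqueProjection

variable [CommRing R] [DecidableEq m] {A : Matrix m n R} {G : Matrix n m R}

theorem mul_mul_nonsing_inv_mul_self (h : IsUnit (A * G).det) : A * (G * (A * G)⁻¹) = 1 := by
  rw [← Matrix.mul_assoc, mul_nonsing_inv _ h]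

theorem mul_one_sub_mul_nonsing_inv_mul_self [DecidableEq n] (h : IsUnit (A * G).det) :
    A * (1 - G * (A * G)⁻¹ * A) = 0 := by
  rw [Matrix.mul_sub, Matrix.mul_one, ← Matrix.mul_assoc, ← Matrix.mul_assoc,
    mul_nonsing_inv _ h, Matrix.one_mul, sub_self]

end ObliqueProjection

end Matrix

/-- The constrained dynamics automatically satisfies the acceleration-level constraint:
with `proj := I - Jᵀ (J D⁻¹ Jᵀ)⁻¹ J D⁻¹` and `F_v := proj · F + Jᵀ (J D⁻¹ Jᵀ)⁻¹ c`, the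
acceleration `a := D⁻¹ (proj · τ - F_v)` satisfies `J a + c = 0` for every input `τ`. -/
theorem constrained_dynamics_satisfies_constraint {n k : ℕ}
    (D : Matrix (Fin n) (Fin n) ℝ) (hD : D.PosDef)
    (J : Matrix (Fin k) (Fin n) ℝ) (hJ : J.rank = k)
    (F : Fin n → ℝ) (c : Fin k → ℝ) (τ : Fin n → ℝ) :
    J *ᵥ (D⁻¹ *ᵥ ((1 - Jᵀ * (J * D⁻¹ * Jᵀ)⁻¹ * J * D⁻¹) *ᵥ τ
        - ((1 - Jᵀ * (J * D⁻¹ * Jᵀ)⁻¹ * J * D⁻¹) *ᵥ F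
            + (Jᵀ * (J * D⁻¹ * Jᵀ)⁻¹) *ᵥ c))) + c = 0 := by
  have hS : (J * D⁻¹ * Jᵀ).PosDef := by
    simpa [conjTranspose_eq_transpose_of_trivial] using
      hD.inv.mul_mul_conjTranspose_of_rank_eq_card (B := J) (by simpa using hJ)
  have hS_det : IsUnit (J * D⁻¹ * Jᵀ).det := (isUnit_iff_isUnit_det _).mp hS.isUnit
  have hproj : J * D⁻¹ * (1 - Jᵀ * (J * D⁻¹ * Jᵀ)⁻¹ * J * D⁻¹) = 0 := by
    simpa only [Matrix.mul_assoc] using mul_one_sub_mul_nonsing_inv_mul_self hS_det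
  have hright_inv : J * D⁻¹ * (Jᵀ * (J * D⁻¹ * Jᵀ)⁻¹) = 1 :=
    mul_mul_nonsing_inv_mul_self hS_det
  rw [mulVec_mulVec, mulVec_sub, mulVec_add, mulVec_mulVec, mulVec_mulVec, mulVec_mulVec, hproj,
    hright_inv]
  simp
end

section
/- Let Ψ be an n×n real matrix. Suppose there exist an n×n real symmetric positive definite matrix W and a real number γ > 0 such that the block matrix [[W, Ψ W], [W Ψᵀ, (1−γ) W]] is positive definite. Then γ < 1 and every complex eigenvalue λ of Ψ satisfies |λ| ≤ √(1−γ) < 1; in particular all eigenvalues of Ψ lie strictly inside the unit circle of the complex plane. -/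
/-!
The block matrix forces `W ≻ 0`. Take a complex eigenvector `Ψ v = μ v` and write `v = W x`.
The quadratic form of the complexified block matrix at `(-μ x, x)` equals
`(1 - γ - |μ|²) x⋆ W x`, which is positive; as `x⋆ W x > 0` this gives `|μ|² < 1 - γ`.
For `n > 0` the matrix `Ψ` has an eigenvalue, whence `γ < 1`.
-/

open Matrix
open scoped MatrixOrder ComplexOrder

theorem Matrix.PosDef.toBlocks₁₁ {R m n : Type*} [Ring R] [PartialOrder R] [StarRing R]
    {M : Matrix (m ⊕ n) (m ⊕ n) R} (h : M.PosDef) : M.toBlocks₁₁.PosDef :=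
  h.submatrix Sum.inl_injective

-- Write `M = Bᴴ B`; after the cast it is still of this form, hence semidefinite, and still nonsingular.
theorem Matrix.PosDef.map_ofReal {𝕜 n : Type*} [RCLike 𝕜] [Fintype n] [DecidableEq n]
    {M : Matrix n n ℝ} (hM : M.PosDef) : (M.map ((↑) : ℝ → 𝕜)).PosDef := by
  obtain ⟨B, rfl⟩ := CStarAlgebra.nonneg_iff_eq_star_mul_self.mp hM.posSemidef.nonneg
  have hmap : (star B * B).map ((↑) : ℝ → 𝕜) = (B.map (↑))ᴴ * B.map (↑) := by
    ext i j
    simp [Matrix.mul_apply]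
  rw [hmap, (posSemidef_conjTranspose_mul_self _).posDef_iff_det_ne_zero, ← hmap,
    ← RCLike.algebraMap_eq_ofReal, ← RingHom.mapMatrix_apply, ← RingHom.map_det]
  exact (map_ne_zero _).mpr hM.det_pos.ne'

theorem Matrix.exists_mulVec_eq_smul_of_mem_spectrum {K n : Type*} [Field K] [Fintype n]
    [DecidableEq n] {A : Matrix n n K} {μ : K} (h : μ ∈ spectrum K A) :
    ∃ v ≠ 0, A *ᵥ v = μ • v := by
  rw [← Matrix.spectrum_toLin', ← Module.End.hasEigenvalue_iff_mem_spectrum] at h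
  obtain ⟨v, hv⟩ := h.exists_hasEigenvector
  exact ⟨v, hv.2, by simpa using hv.apply_eq_smul⟩

section Blocks

variable {𝕜 n : Type*} [RCLike 𝕜] [Fintype n]

theorem Matrix.PosDef.norm_sq_mul_re_lt_of_fromBlocks {A B D : Matrix n n 𝕜}
    (h : (fromBlocks A B Bᴴ D).PosDef) {μ : 𝕜} {x : n → 𝕜} (hx : x ≠ 0)
    (hBx : B *ᵥ x = μ • A *ᵥ x) :
    ‖μ‖ ^ 2 * RCLike.re (star x ⬝ᵥ A *ᵥ x) < RCLike.re (star x ⬝ᵥ D *ᵥ x) := by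
  set z : n ⊕ n → 𝕜 := -μ • x ⊕ᵥ x
  have hz : z ≠ 0 := fun h0 => hx (funext fun i => congrFun h0 (Sum.inr i))
  have hBHx : star x ⬝ᵥ Bᴴ *ᵥ x = star μ * star (star x ⬝ᵥ A *ᵥ x) := by
    rw [dotProduct_mulVec, ← star_mulVec, hBx, star_dotProduct, dotProduct_smul, smul_eq_mul,
      star_mul']
  have hform : star z ⬝ᵥ fromBlocks A B Bᴴ D *ᵥ z
      = star x ⬝ᵥ D *ᵥ x - (‖μ‖ : 𝕜) ^ 2 * star (star x ⬝ᵥ A *ᵥ x) := by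
    simp only [z, fromBlocks_mulVec, Sum.elim_comp_inl, Sum.elim_comp_inr, Function.star_sumElim,
      sumElim_dotProduct_sumElim, mulVec_smul, hBx, dotProduct_add, dotProduct_smul,
      smul_dotProduct, star_smul, hBHx, smul_eq_mul]
    rw [RCLike.star_def, map_neg, ← RCLike.mul_conj]
    ring
  have hpos := h.re_dotProduct_pos hz
  rw [hform] at hpos
  simpa [RCLike.conj_re] using hpos

theorem Matrix.PosDef.norm_sq_lt_of_fromBlocks_smul {A B : Matrix n n 𝕜} {c : ℝ}
    (h : (fromBlocks A B Bᴴ (c • A)).PosDef) {μ : 𝕜} {x : n → 𝕜} (hx : x ≠ 0)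
    (hBx : B *ᵥ x = μ • A *ᵥ x) :
    ‖μ‖ ^ 2 < c := by
  have hA : A.PosDef := by simpa using h.toBlocks₁₁
  have hlt := h.norm_sq_mul_re_lt_of_fromBlocks hx hBx
  rw [smul_mulVec, dotProduct_smul, RCLike.smul_re] at hlt
  exact lt_of_mul_lt_mul_right hlt (hA.re_dotProduct_pos hx).le

end Blocks

theorem Matrix.norm_sq_lt_of_mem_spectrum_of_posDef_fromBlocks {n : Type*} [Fintype n]
    [DecidableEq n] {Ψ W : Matrix n n ℝ} {c : ℝ}
    (h : (fromBlocks W (Ψ * W) (W * Ψᵀ) (c • W)).PosDef) {μ : ℂ}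
    (hμ : μ ∈ spectrum ℂ (Ψ.map Complex.ofReal)) : ‖μ‖ ^ 2 < c := by
  have hW : W.PosDef := by simpa using h.toBlocks₁₁
  have hBH : W * Ψᵀ = (Ψ * W)ᴴ := by
    rw [conjTranspose_mul, hW.isHermitian.eq, conjTranspose_eq_transpose_of_trivial]
  have hc : (fromBlocks (W.map Complex.ofReal) ((Ψ * W).map Complex.ofReal)
      ((Ψ * W).map Complex.ofReal)ᴴ (c • W.map Complex.ofReal)).PosDef := by
    have hmap : ((fromBlocks W (Ψ * W) (W * Ψᵀ) (c • W)).map Complex.ofReal).PosDef :=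
      h.map_ofReal
    rw [fromBlocks_map, hBH, conjTranspose_map _ fun _ => (Complex.conj_ofReal _).symm] at hmap
    convert hmap using 2
    ext i j
    simp
  obtain ⟨v, hv0, hv⟩ := exists_mulVec_eq_smul_of_mem_spectrum hμ
  have hWc : (W.map Complex.ofReal).PosDef := hW.map_ofReal
  obtain ⟨x, rfl⟩ := mulVec_surjective_iff_isUnit.mpr hWc.isUnit v
  have hx : x ≠ 0 := by
    rintro rfl
    exact hv0 (mulVec_zero _)
  refine hc.norm_sq_lt_of_fromBlocks_smul hx ?_
  have hmul : (Ψ * W).map Complex.ofReal = Ψ.map Complex.ofReal * W.map Complex.ofReal :=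
    Matrix.map_mul (f := Complex.ofRealHom)
  rw [hmul, ← mulVec_mulVec, hv]

theorem nmi_implies_schur_stable_general {n : ℕ} (hn : 0 < n)
    (Ψ : Matrix (Fin n) (Fin n) ℝ)
    (W : Matrix (Fin n) (Fin n) ℝ)
    (γ : ℝ) (hγ : 0 < γ)
    (hnmi : (Matrix.fromBlocks W (Ψ * W) (W * Ψᵀ) ((1 - γ) • W)).PosDef) :
    γ < 1 ∧ Real.sqrt (1 - γ) < 1 ∧
      ∀ μ ∈ spectrum ℂ (Ψ.map (Complex.ofReal)), ‖μ‖ ≤ Real.sqrt (1 - γ) := by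
  have hspec : ∀ μ ∈ spectrum ℂ (Ψ.map Complex.ofReal), ‖μ‖ ^ 2 < 1 - γ :=
    fun μ hμ => norm_sq_lt_of_mem_spectrum_of_posDef_fromBlocks hnmi hμ
  have : Nonempty (Fin n) := ⟨⟨0, hn⟩⟩
  obtain ⟨μ₀, hμ₀⟩ :=
    spectrum.nonempty_of_isAlgClosed_of_finiteDimensional ℂ (Ψ.map Complex.ofReal)
  have hγ1 : γ < 1 := by linarith [hspec μ₀ hμ₀, sq_nonneg ‖μ₀‖]
  exact ⟨hγ1, (Real.sqrt_lt' one_pos).mpr (by linarith),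
    fun μ hμ => Real.le_sqrt_of_sq_le (hspec μ hμ).le⟩

/-- Feasibility of the NMI implies Schur stability: if there exist a symmetric positive
definite `W` and `γ > 0` with `[[W, Ψ W], [W Ψᵀ, (1-γ) W]] ≻ 0`, then `γ < 1` and every
complex eigenvalue `μ` of `Ψ` satisfies `|μ| ≤ √(1-γ) < 1`; in particular all eigenvalues
of `Ψ` lie strictly inside the unit circle. -/
theorem nmi_implies_schur_stable {n : ℕ} (hn : 0 < n)
    (Ψ : Matrix (Fin n) (Fin n) ℝ)
    (W : Matrix (Fin n) (Fin n) ℝ) (hW : W.PosDef)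
    (γ : ℝ) (hγ : 0 < γ)
    (hnmi : (Matrix.fromBlocks W (Ψ * W) (W * Ψᵀ) ((1 - γ) • W)).PosDef) :
    γ < 1 ∧ Real.sqrt (1 - γ) < 1 ∧
      ∀ μ ∈ spectrum ℂ (Ψ.map (Complex.ofReal)), ‖μ‖ ≤ Real.sqrt (1 - γ) :=
  nmi_implies_schur_stable_general hn Ψ W γ hγ hnmi
end
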